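/- arXiv:2003.04697 — 3 statements merged into one kernel-verified Lean document; each statement's English description precedes it below -/
import Mathlib

section
/- Let G, k : [0,1]² → ℝ be continuous and nonnegative, N ≥ 0, and suppose N · max|k| · max_x ∫₀¹ G(x,s) ds < 1. If p : [0,1] → ℝ is continuous with p ≥ 0 and h : [0,1] → ℝ is continuous with h ≥ 0, then the unique fixed point y ∈ C[0,1] of (Ky)(x) = ∫₀¹ G(x,s)p(s)ds + N∫₀¹∫₀¹ G(x,s)k(s,t)y(t)dt ds + h(x) satisfies y(x) ≥ 0 for all x ∈ [0,1]. -/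
/-!
If `y` were negative somewhere, its minimum `m < 0` on `[0,1]` would be attained at some `x₀`.
Since `G`, `k`, `p`, `h` are nonnegative and `y ≥ m`, each term of `K y` is bounded below at `x₀`,
giving `m = (K y)(x₀) ≥ N · max|k| · max ∫ G · m > m` because `N · max|k| · max ∫ G < 1`.
-/

open Real Set intervalIntegral

/-- The integral operator `K` of the linear nonlocal problem. -/
noncomputable def Kop (G k : ℝ → ℝ → ℝ) (N : ℝ) (p h y : ℝ → ℝ) (x : ℝ) : ℝ :=
  (∫ s in (0:ℝ)..1, G x s * p s)
    + N * (∫ s in (0:ℝ)..1, ∫ t in (0:ℝ)..1, G x s * k s t * y t) + h x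

open MeasureTheory

theorem ContinuousOn.intervalIntegrable_section {f : ℝ → ℝ → ℝ} {a b c d x : ℝ}
    (hf : ContinuousOn (fun q : ℝ × ℝ => f q.1 q.2) (Icc a b ×ˢ Icc c d))
    (hx : x ∈ Icc a b) (hcd : c ≤ d) : IntervalIntegrable (f x) volume c d :=
  (hf.comp (Continuous.continuousOn (by fun_prop)) fun _ ht => mk_mem_prod hx ht)
    |>.intervalIntegrable_of_Icc hcd

/-- If `w * f` is not integrable the right-hand side is `0`, which still dominates since `c ≤ 0`. -/
theorem intervalIntegral.integral_mul_const_le_integral_mul {w f : ℝ → ℝ} {a b c : ℝ}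
    (hab : a ≤ b) (hc : c ≤ 0) (hw : IntervalIntegrable w volume a b)
    (hw0 : ∀ x ∈ Icc a b, 0 ≤ w x) (hcf : ∀ x ∈ Icc a b, c ≤ f x) :
    (∫ x in a..b, w x) * c ≤ ∫ x in a..b, w x * f x := by
  by_cases hwf : IntervalIntegrable (fun x => w x * f x) volume a b
  · rw [← integral_mul_const]
    exact integral_mono_on hab (hw.mul_const c) hwf
      fun x hx => mul_le_mul_of_nonneg_left (hcf x hx) (hw0 x hx)
  · rw [integral_undef hwf]
    exact mul_nonpos_of_nonneg_of_nonpos (integral_nonneg hab hw0) hc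

theorem le_Kop_of_forall_le {G k : ℝ → ℝ → ℝ} {N kmax Gmax m x : ℝ} {p h y : ℝ → ℝ}
    (hG : IntervalIntegrable (G x) volume 0 1)
    (hGnn : ∀ s ∈ Icc (0:ℝ) 1, 0 ≤ G x s) (hGmax : ∫ s in (0:ℝ)..1, G x s ≤ Gmax)
    (hk : ∀ s ∈ Icc (0:ℝ) 1, IntervalIntegrable (k s) volume 0 1)
    (hknn : ∀ s ∈ Icc (0:ℝ) 1, ∀ t ∈ Icc (0:ℝ) 1, 0 ≤ k s t)
    (hkmax : ∀ s ∈ Icc (0:ℝ) 1, ∀ t ∈ Icc (0:ℝ) 1, k s t ≤ kmax)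
    (hN : 0 ≤ N) (hhnn : 0 ≤ h x) (hpnn : ∀ s ∈ Icc (0:ℝ) 1, 0 ≤ p s)
    (hm : m ≤ 0) (hym : ∀ t ∈ Icc (0:ℝ) 1, m ≤ y t) :
    N * kmax * Gmax * m ≤ Kop G k N p h y x := by
  have h01 : (0:ℝ) ∈ Icc (0:ℝ) 1 := left_mem_Icc.2 zero_le_one
  have hkm : kmax * m ≤ 0 :=
    mul_nonpos_of_nonneg_of_nonpos ((hknn 0 h01 0 h01).trans (hkmax 0 h01 0 h01)) hm
  have hinner : ∀ s ∈ Icc (0:ℝ) 1, kmax * m ≤ ∫ t in (0:ℝ)..1, k s t * y t := fun s hs =>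
    calc kmax * m ≤ (∫ t in (0:ℝ)..1, k s t) * m := by
          refine mul_le_mul_of_nonpos_right ?_ hm
          simpa using integral_mono_on zero_le_one (hk s hs) intervalIntegrable_const (hkmax s hs)
      _ ≤ ∫ t in (0:ℝ)..1, k s t * y t :=
          integral_mul_const_le_integral_mul zero_le_one hm (hk s hs) (hknn s hs) hym
  have houter : Gmax * (kmax * m) ≤ ∫ s in (0:ℝ)..1, ∫ t in (0:ℝ)..1, G x s * k s t * y t :=
    calc Gmax * (kmax * m) ≤ (∫ s in (0:ℝ)..1, G x s) * (kmax * m) :=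
          mul_le_mul_of_nonpos_right hGmax hkm
      _ ≤ ∫ s in (0:ℝ)..1, G x s * ∫ t in (0:ℝ)..1, k s t * y t :=
          integral_mul_const_le_integral_mul zero_le_one hkm hG hGnn hinner
      _ = ∫ s in (0:ℝ)..1, ∫ t in (0:ℝ)..1, G x s * k s t * y t := by
          simp only [mul_assoc, intervalIntegral.integral_const_mul]
  have hpterm : 0 ≤ ∫ s in (0:ℝ)..1, G x s * p s :=
    integral_nonneg zero_le_one fun s hs => mul_nonneg (hGnn s hs) (hpnn s hs)
  have := mul_le_mul_of_nonneg_left houter hN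
  rw [Kop]
  linarith

theorem stmt_7_general (G k : ℝ → ℝ → ℝ) (N : ℝ) (h p : ℝ → ℝ)
    (hG : ContinuousOn (fun q : ℝ × ℝ => G q.1 q.2) (Set.Icc 0 1 ×ˢ Set.Icc 0 1))
    (hGnn : ∀ x ∈ Set.Icc (0:ℝ) 1, ∀ s ∈ Set.Icc (0:ℝ) 1, 0 ≤ G x s)
    (hk : ContinuousOn (fun q : ℝ × ℝ => k q.1 q.2) (Set.Icc 0 1 ×ˢ Set.Icc 0 1))
    (hknn : ∀ x ∈ Set.Icc (0:ℝ) 1, ∀ t ∈ Set.Icc (0:ℝ) 1, 0 ≤ k x t)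
    (hN : 0 ≤ N)
    (hhnn : ∀ x ∈ Set.Icc (0:ℝ) 1, 0 ≤ h x)
    (hpnn : ∀ x ∈ Set.Icc (0:ℝ) 1, 0 ≤ p x)
    (kmax Gmax : ℝ)
    (hkmax : IsGreatest {r | ∃ x ∈ Set.Icc (0:ℝ) 1, ∃ t ∈ Set.Icc (0:ℝ) 1, r = |k x t|} kmax)
    (hGmax : IsGreatest {r | ∃ x ∈ Set.Icc (0:ℝ) 1, r = ∫ s in (0:ℝ)..1, G x s} Gmax)
    (hd : N * kmax * Gmax < 1) :
    ∀ y : ℝ → ℝ, ContinuousOn y (Set.Icc 0 1) →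
      (∀ x ∈ Set.Icc (0:ℝ) 1, y x = Kop G k N p h y x) →
      ∀ x ∈ Set.Icc (0:ℝ) 1, 0 ≤ y x := by
  intro y hy hfix x hx
  obtain ⟨x₀, hx₀, hmin⟩ := isCompact_Icc.exists_isMinOn (nonempty_Icc.2 zero_le_one) hy
  by_contra! hneg
  have hm : y x₀ < 0 := (hmin hx).trans_lt hneg
  have hbound := le_Kop_of_forall_le (p := p) (h := h) (N := N)
    (hG.intervalIntegrable_section hx₀ zero_le_one) (hGnn x₀ hx₀) (hGmax.2 ⟨x₀, hx₀, rfl⟩)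
    (fun s hs => hk.intervalIntegrable_section hs zero_le_one) hknn
    (fun s hs t ht => (le_abs_self _).trans (hkmax.2 ⟨s, hs, t, ht, rfl⟩)) hN (hhnn x₀ hx₀)
    hpnn hm.le fun t ht => hmin ht
  rw [← hfix x₀ hx₀] at hbound
  linarith [mul_lt_mul_of_neg_right hd hm]

theorem stmt_7 (G k : ℝ → ℝ → ℝ) (N : ℝ) (h p : ℝ → ℝ)
    (hG : ContinuousOn (fun q : ℝ × ℝ => G q.1 q.2) (Set.Icc 0 1 ×ˢ Set.Icc 0 1))
    (hGnn : ∀ x ∈ Set.Icc (0:ℝ) 1, ∀ s ∈ Set.Icc (0:ℝ) 1, 0 ≤ G x s)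
    (hk : ContinuousOn (fun q : ℝ × ℝ => k q.1 q.2) (Set.Icc 0 1 ×ˢ Set.Icc 0 1))
    (hknn : ∀ x ∈ Set.Icc (0:ℝ) 1, ∀ t ∈ Set.Icc (0:ℝ) 1, 0 ≤ k x t)
    (hN : 0 ≤ N)
    (hh : ContinuousOn h (Set.Icc 0 1)) (hp : ContinuousOn p (Set.Icc 0 1))
    (hhnn : ∀ x ∈ Set.Icc (0:ℝ) 1, 0 ≤ h x)
    (hpnn : ∀ x ∈ Set.Icc (0:ℝ) 1, 0 ≤ p x)
    (kmax Gmax : ℝ)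
    (hkmax : IsGreatest {r | ∃ x ∈ Set.Icc (0:ℝ) 1, ∃ t ∈ Set.Icc (0:ℝ) 1, r = |k x t|} kmax)
    (hGmax : IsGreatest {r | ∃ x ∈ Set.Icc (0:ℝ) 1, r = ∫ s in (0:ℝ)..1, G x s} Gmax)
    (hd : N * kmax * Gmax < 1) :
    ∀ y : ℝ → ℝ, ContinuousOn y (Set.Icc 0 1) →
      (∀ x ∈ Set.Icc (0:ℝ) 1, y x = Kop G k N p h y x) →
      ∀ x ∈ Set.Icc (0:ℝ) 1, 0 ≤ y x :=
  stmt_7_general G k N h p hG hGnn hk hknn hN hhnn hpnn kmax Gmax hkmax hGmax hd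
end

section
/- Let G, k : [0,1]² → ℝ be continuous and nonnegative, N ≥ 0 with N · max|k| · max_x ∫₀¹ G(x,s)ds < 1. If p ≤ 0 and h ≤ 0 on [0,1], then the unique fixed point y of the operator (Ky)(x) = ∫₀¹ G(x,s)p(s)ds + N∫₀¹∫₀¹ G(x,s)k(s,t)y(t)dt ds + h(x) satisfies y ≤ 0 on [0,1]. -/
/-!
Let `M` be the maximum of `y` on `[0, 1]`. Since `G, k ≥ 0`, `p, h ≤ 0` and `y ≤ M`, the fixed point
equation gives `M = (K y)(x₀) ≤ N · max k · max_x ∫ G(x, ·) · M`, which for `M > 0` contradicts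
`N · max k · max_x ∫ G(x, ·) < 1`. Hence `M ≤ 0`.
-/

open Real Set intervalIntegral

open MeasureTheory

namespace intervalIntegral

variable {f g : ℝ → ℝ} {a b : ℝ}

theorem integral_nonpos (hab : a ≤ b) (hf : ∀ u ∈ Icc a b, f u ≤ 0) : ∫ u in a..b, f u ≤ 0 := by
  simpa using integral_nonneg hab fun u hu => neg_nonneg.mpr (hf u hu)

/-- No integrability of `f` is needed: otherwise its integral is `0 ≤ ∫ g`. -/
theorem integral_mono_on_of_integral_nonneg (hab : a ≤ b) (hg : IntervalIntegrable g volume a b)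
    (hg₀ : 0 ≤ ∫ u in a..b, g u) (h : ∀ u ∈ Icc a b, f u ≤ g u) :
    ∫ u in a..b, f u ≤ ∫ u in a..b, g u := by
  by_cases hf : IntervalIntegrable f volume a b
  · exact integral_mono_on hab hf hg h
  · rwa [integral_undef hf]

end intervalIntegral

section

variable {g y : ℝ → ℝ} {k : ℝ → ℝ → ℝ} {gmax kmax M : ℝ}

theorem integral_integral_mul_le (hg : ContinuousOn g (Icc 0 1)) (hg₀ : ∀ s ∈ Icc (0:ℝ) 1, 0 ≤ g s)
    (hgmax : ∫ s in (0:ℝ)..1, g s ≤ gmax)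
    (hk₀ : ∀ s ∈ Icc (0:ℝ) 1, ∀ t ∈ Icc (0:ℝ) 1, 0 ≤ k s t)
    (hk : ∀ s ∈ Icc (0:ℝ) 1, ∀ t ∈ Icc (0:ℝ) 1, k s t ≤ kmax)
    (hy : ∀ t ∈ Icc (0:ℝ) 1, y t ≤ M) (hM : 0 ≤ M) :
    ∫ s in (0:ℝ)..1, ∫ t in (0:ℝ)..1, g s * k s t * y t ≤ gmax * (kmax * M) := by
  have h01 : (0:ℝ) ∈ Icc (0:ℝ) 1 := left_mem_Icc.mpr zero_le_one
  have hc : 0 ≤ kmax * M := mul_nonneg ((hk₀ 0 h01 0 h01).trans (hk 0 h01 0 h01)) hM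
  have hinner : ∀ s ∈ Icc (0:ℝ) 1, ∫ t in (0:ℝ)..1, g s * k s t * y t ≤ g s * (kmax * M) := by
    intro s hs
    have hbound : ∀ t ∈ Icc (0:ℝ) 1, g s * k s t * y t ≤ g s * (kmax * M) := fun t ht =>
      calc g s * k s t * y t ≤ g s * k s t * M :=
            mul_le_mul_of_nonneg_left (hy t ht) (mul_nonneg (hg₀ s hs) (hk₀ s hs t ht))
        _ ≤ g s * (kmax * M) := by
            rw [mul_assoc]
            exact mul_le_mul_of_nonneg_left (mul_le_mul_of_nonneg_right (hk s hs t ht) hM) (hg₀ s hs)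
    simpa using integral_mono_on_of_integral_nonneg zero_le_one intervalIntegrable_const
      (by simpa using mul_nonneg (hg₀ s hs) hc) hbound
  calc ∫ s in (0:ℝ)..1, ∫ t in (0:ℝ)..1, g s * k s t * y t
      ≤ ∫ s in (0:ℝ)..1, g s * (kmax * M) :=
        integral_mono_on_of_integral_nonneg zero_le_one
          ((hg.mul continuousOn_const).intervalIntegrable_of_Icc zero_le_one)
          (integral_nonneg zero_le_one fun s hs => mul_nonneg (hg₀ s hs) hc) hinner
    _ = (∫ s in (0:ℝ)..1, g s) * (kmax * M) := intervalIntegral.integral_mul_const _ _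
    _ ≤ gmax * (kmax * M) := mul_le_mul_of_nonneg_right hgmax hc

theorem Kop_le_of_le {G : ℝ → ℝ → ℝ} {N : ℝ} {p h : ℝ → ℝ} {x : ℝ}
    (hG : ContinuousOn (G x) (Icc 0 1)) (hG₀ : ∀ s ∈ Icc (0:ℝ) 1, 0 ≤ G x s)
    (hGmax : ∫ s in (0:ℝ)..1, G x s ≤ gmax)
    (hk₀ : ∀ s ∈ Icc (0:ℝ) 1, ∀ t ∈ Icc (0:ℝ) 1, 0 ≤ k s t)
    (hk : ∀ s ∈ Icc (0:ℝ) 1, ∀ t ∈ Icc (0:ℝ) 1, k s t ≤ kmax) (hN : 0 ≤ N)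
    (hp : ∀ s ∈ Icc (0:ℝ) 1, p s ≤ 0) (hh : h x ≤ 0)
    (hy : ∀ t ∈ Icc (0:ℝ) 1, y t ≤ M) (hM : 0 ≤ M) :
    Kop G k N p h y x ≤ N * kmax * gmax * M := by
  have hsource : ∫ s in (0:ℝ)..1, G x s * p s ≤ 0 :=
    integral_nonpos zero_le_one fun s hs => mul_nonpos_of_nonneg_of_nonpos (hG₀ s hs) (hp s hs)
  have hdouble := integral_integral_mul_le hG hG₀ hGmax hk₀ hk hy hM
  calc Kop G k N p h y x ≤ 0 + N * (gmax * (kmax * M)) + 0 := by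
        unfold Kop; gcongr
    _ = N * kmax * gmax * M := by ring

end

theorem stmt_8_general (G k : ℝ → ℝ → ℝ) (N : ℝ) (h p : ℝ → ℝ)
    (hG : ContinuousOn (fun q : ℝ × ℝ => G q.1 q.2) (Set.Icc 0 1 ×ˢ Set.Icc 0 1))
    (hGnn : ∀ x ∈ Set.Icc (0:ℝ) 1, ∀ s ∈ Set.Icc (0:ℝ) 1, 0 ≤ G x s)
    (hknn : ∀ x ∈ Set.Icc (0:ℝ) 1, ∀ t ∈ Set.Icc (0:ℝ) 1, 0 ≤ k x t)
    (hN : 0 ≤ N)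
    (hhnn : ∀ x ∈ Set.Icc (0:ℝ) 1, h x ≤ 0)
    (hpnn : ∀ x ∈ Set.Icc (0:ℝ) 1, p x ≤ 0)
    (kmax Gmax : ℝ)
    (hkmax : IsGreatest {r | ∃ x ∈ Set.Icc (0:ℝ) 1, ∃ t ∈ Set.Icc (0:ℝ) 1, r = |k x t|} kmax)
    (hGmax : IsGreatest {r | ∃ x ∈ Set.Icc (0:ℝ) 1, r = ∫ s in (0:ℝ)..1, G x s} Gmax)
    (hd : N * kmax * Gmax < 1) :
    ∀ y : ℝ → ℝ, ContinuousOn y (Set.Icc 0 1) →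
      (∀ x ∈ Set.Icc (0:ℝ) 1, y x = Kop G k N p h y x) →
      ∀ x ∈ Set.Icc (0:ℝ) 1, y x ≤ 0 := by
  intro y hy hfix x hx
  obtain ⟨x₀, hx₀, hmax⟩ := isCompact_Icc.exists_isMaxOn (nonempty_Icc.2 zero_le_one) hy
  refine (hmax hx).trans (not_lt.mp fun hpos => ?_)
  have hk : ∀ s ∈ Icc (0:ℝ) 1, ∀ t ∈ Icc (0:ℝ) 1, k s t ≤ kmax := fun s hs t ht =>
    (le_abs_self _).trans (hkmax.2 ⟨s, hs, t, ht, rfl⟩)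
  have hGx₀ : ContinuousOn (G x₀) (Icc 0 1) :=
    hG.comp (continuous_const.prodMk continuous_id).continuousOn fun s hs => ⟨hx₀, hs⟩
  have hle : y x₀ ≤ N * kmax * Gmax * y x₀ :=
    (hfix x₀ hx₀).le.trans <| Kop_le_of_le hGx₀ (hGnn x₀ hx₀) (hGmax.2 ⟨x₀, hx₀, rfl⟩) hknn hk hN
      hpnn (hhnn x₀ hx₀) (fun t ht => hmax ht) hpos.le
  linarith [mul_lt_of_lt_one_left hpos hd]

theorem stmt_8 (G k : ℝ → ℝ → ℝ) (N : ℝ) (h p : ℝ → ℝ)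
    (hG : ContinuousOn (fun q : ℝ × ℝ => G q.1 q.2) (Set.Icc 0 1 ×ˢ Set.Icc 0 1))
    (hGnn : ∀ x ∈ Set.Icc (0:ℝ) 1, ∀ s ∈ Set.Icc (0:ℝ) 1, 0 ≤ G x s)
    (hk : ContinuousOn (fun q : ℝ × ℝ => k q.1 q.2) (Set.Icc 0 1 ×ˢ Set.Icc 0 1))
    (hknn : ∀ x ∈ Set.Icc (0:ℝ) 1, ∀ t ∈ Set.Icc (0:ℝ) 1, 0 ≤ k x t)
    (hN : 0 ≤ N)
    (hh : ContinuousOn h (Set.Icc 0 1)) (hp : ContinuousOn p (Set.Icc 0 1))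
    (hhnn : ∀ x ∈ Set.Icc (0:ℝ) 1, h x ≤ 0)
    (hpnn : ∀ x ∈ Set.Icc (0:ℝ) 1, p x ≤ 0)
    (kmax Gmax : ℝ)
    (hkmax : IsGreatest {r | ∃ x ∈ Set.Icc (0:ℝ) 1, ∃ t ∈ Set.Icc (0:ℝ) 1, r = |k x t|} kmax)
    (hGmax : IsGreatest {r | ∃ x ∈ Set.Icc (0:ℝ) 1, r = ∫ s in (0:ℝ)..1, G x s} Gmax)
    (hd : N * kmax * Gmax < 1) :
    ∀ y : ℝ → ℝ, ContinuousOn y (Set.Icc 0 1) →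
      (∀ x ∈ Set.Icc (0:ℝ) 1, y x = Kop G k N p h y x) →
      ∀ x ∈ Set.Icc (0:ℝ) 1, y x ≤ 0 :=
  stmt_8_general G k N h p hG hGnn hknn hN hhnn hpnn kmax Gmax hkmax hGmax hd
end

section
/- Let m > 0 with m < π. Then for all (x,s) ∈ [0,1]² with x ≤ s, the Green function G(x,s) = (1/(2m³))[sin(mx)sin(m(1-s))/sin m − sinh(mx)sinh(m(1-s))/sinh m] satisfies G(x,s) ≥ 0. -/
open Real Set

/-!
By the product-to-sum formulas, `sin m · sinh(ma) sinh(mb) ≤ sinh m · sin(ma) sin(mb)` says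
`h (a - b) ≥ h (a + b)` for `h t = sinh m · cos(mt) + sin m · cosh(mt)`. Since
`h' t = m (sin m · sinh(mt) - sinh m · sin(mt))`, `h` is antitone on `[0, 1]` as soon as
`sin m · sinh(mt) ≤ sinh m · sin(mt)` there, which follows from the chord bounds
`t sin m ≤ sin(mt)` (concavity of `sin` on `[0, π]`) and `sinh(mt) ≤ t sinh m` (convexity of
`sinh` on `[0, ∞)`). With `a = x`, `b = 1 - s` this is the nonnegativity of the Green function.
-/

lemma convexOn_sinh_Ici : ConvexOn ℝ (Ici 0) sinh := by
  refine MonotoneOn.convexOn_of_deriv (convex_Ici 0) continuous_sinh.continuousOn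
    differentiable_sinh.differentiableOn ?_
  rw [Real.deriv_sinh, interior_Ici]
  intro x hx y hy hxy
  rw [cosh_le_cosh, abs_of_pos hx, abs_of_pos hy]
  exact hxy

lemma sinh_mul_le_mul_sinh {t x : ℝ} (ht₀ : 0 ≤ t) (ht₁ : t ≤ 1) (hx : 0 ≤ x) :
    sinh (t * x) ≤ t * sinh x := by
  have := convexOn_sinh_Ici.2 (mem_Ici.2 le_rfl) (mem_Ici.2 hx) (sub_nonneg.2 ht₁) ht₀
    (sub_add_cancel 1 t)
  simpa using this

lemma mul_sin_le_sin_mul {t x : ℝ} (ht₀ : 0 ≤ t) (ht₁ : t ≤ 1) (hx₀ : 0 ≤ x) (hxπ : x ≤ π) :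
    t * sin x ≤ sin (t * x) := by
  have := strictConcaveOn_sin_Icc.concaveOn.2 (left_mem_Icc.2 pi_pos.le) ⟨hx₀, hxπ⟩
    (sub_nonneg.2 ht₁) ht₀ (sub_add_cancel 1 t)
  simpa using this

lemma sin_mul_sinh_mul_le {m t : ℝ} (hm₀ : 0 ≤ m) (hmπ : m ≤ π) (ht₀ : 0 ≤ t) (ht₁ : t ≤ 1) :
    sin m * sinh (m * t) ≤ sinh m * sin (m * t) := by
  have hsin := mul_sin_le_sin_mul ht₀ ht₁ hm₀ hmπ
  have hsinh := sinh_mul_le_mul_sinh ht₀ ht₁ hm₀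
  rw [mul_comm m t]
  calc sin m * sinh (t * m) ≤ sin m * (t * sinh m) :=
        mul_le_mul_of_nonneg_left hsinh (sin_nonneg_of_nonneg_of_le_pi hm₀ hmπ)
    _ = sinh m * (t * sin m) := by ring
    _ ≤ sinh m * sin (t * m) := mul_le_mul_of_nonneg_left hsin (sinh_nonneg_iff.2 hm₀)

lemma hasDerivAt_sinh_mul_cos_add_sin_mul_cosh (m t : ℝ) :
    HasDerivAt (fun u ↦ sinh m * cos (m * u) + sin m * cosh (m * u))
      (m * (sin m * sinh (m * t) - sinh m * sin (m * t))) t := by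
  have hmu : HasDerivAt (fun u ↦ m * u) m t := by simpa using (hasDerivAt_id t).const_mul m
  have hcos := ((hasDerivAt_cos (m * t)).comp t hmu).const_mul (sinh m)
  have hcosh := ((hasDerivAt_cosh (m * t)).comp t hmu).const_mul (sin m)
  exact (hcos.add hcosh).congr_deriv (by ring)

lemma antitoneOn_sinh_mul_cos_add_sin_mul_cosh {m : ℝ} (hm₀ : 0 ≤ m) (hmπ : m ≤ π) :
    AntitoneOn (fun t ↦ sinh m * cos (m * t) + sin m * cosh (m * t)) (Icc 0 1) := by
  have hderiv := hasDerivAt_sinh_mul_cos_add_sin_mul_cosh m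
  refine antitoneOn_of_deriv_nonpos (convex_Icc 0 1)
    (fun t _ ↦ (hderiv t).continuousAt.continuousWithinAt)
    (fun t _ ↦ (hderiv t).differentiableAt.differentiableWithinAt) fun t ht ↦ ?_
  rw [interior_Icc] at ht
  rw [(hderiv t).deriv]
  exact mul_nonpos_of_nonneg_of_nonpos hm₀
    (sub_nonpos.2 (sin_mul_sinh_mul_le hm₀ hmπ ht.1.le ht.2.le))

lemma sin_mul_sinh_mul_sinh_le_of_le {m a b : ℝ} (hm₀ : 0 ≤ m) (hmπ : m ≤ π) (hb : 0 ≤ b)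
    (hba : b ≤ a) (hab : a + b ≤ 1) :
    sin m * (sinh (m * a) * sinh (m * b)) ≤ sinh m * (sin (m * a) * sin (m * b)) := by
  have key := antitoneOn_sinh_mul_cos_add_sin_mul_cosh hm₀ hmπ
    ⟨sub_nonneg.2 hba, by linarith⟩ ⟨by linarith, hab⟩ (by linarith : a - b ≤ a + b)
  simp only [mul_sub, mul_add, cos_sub, cos_add, cosh_sub, cosh_add] at key
  linarith

lemma sin_mul_sinh_mul_sinh_le {m a b : ℝ} (hm₀ : 0 ≤ m) (hmπ : m ≤ π) (ha : 0 ≤ a)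
    (hb : 0 ≤ b) (hab : a + b ≤ 1) :
    sin m * (sinh (m * a) * sinh (m * b)) ≤ sinh m * (sin (m * a) * sin (m * b)) := by
  rcases le_total b a with hba | hab'
  · exact sin_mul_sinh_mul_sinh_le_of_le hm₀ hmπ hb hba hab
  · rw [mul_comm (sinh _), mul_comm (sin (m * a))]
    exact sin_mul_sinh_mul_sinh_le_of_le hm₀ hmπ ha hab' (by linarith)

theorem stmt_17 (m : ℝ) (hm : 0 < m) (hmπ : m < Real.pi) :
    ∀ x s : ℝ, 0 ≤ x → x ≤ s → s ≤ 1 →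
      0 ≤ (1/(2*m^3)) * (Real.sin (m*x) * Real.sin (m*(1-s)) / Real.sin m
        - Real.sinh (m*x) * Real.sinh (m*(1-s)) / Real.sinh m) := by
  intro x s hx hxs hs1
  have hsin : 0 < sin m := sin_pos_of_pos_of_lt_pi hm hmπ
  have hsinh : 0 < sinh m := sinh_pos_iff.2 hm
  have key := sin_mul_sinh_mul_sinh_le hm.le hmπ.le hx (sub_nonneg.2 hs1) (by linarith)
  refine mul_nonneg (by positivity) (sub_nonneg.2 ?_)
  rw [div_le_div_iff₀ hsinh hsin]
  linarith
end
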